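/- Properties of the lower semicontinuous envelope of the Dirichlet energy (Lemma 5.7(b)): Let H be a real Hilbert space, D ⊆ H a linear subspace, and C : D → H a linear map which is symmetric (⟨Cx,y⟩ = ⟨x,Cy⟩ for x,y ∈ D) and dissipative (⟨Cx,x⟩ ≤ 0 for x ∈ D). Define F : H → [0,+∞] by F(x) := −(1/2)⟨Cx,x⟩ for x ∈ D and F(x) := +∞ otherwise, and let 𝓔 be the lower semicontinuous envelope of F, i.e. 𝓔(x) := sup_{U ∈ 𝓝(x)} inf_{y ∈ U} F(y) (the largest lower semicontinuous function ≤ F). Then: (i) D ⊆ {x : 𝓔(x) < ∞}; (ii) 0 ≤ 𝓔 ≤ F on H; (iii) 𝓔(x) = F(x) for every x ∈ D; (iv) 𝓔 is convex: 𝓔((1−t)x + ty) ≤ (1−t)𝓔(x) + t𝓔(y) for all x,y ∈ H, t ∈ [0,1]; (v) for every ρ ∈ H with 𝓔(ρ) < ∞ there exists a sequence ρₙ ∈ D with ρₙ → ρ and F(ρₙ) → 𝓔(ρ). -/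
import Mathlib


open Filter Topology
open scoped RealInnerProductSpace

noncomputable section

open Classical in
/-- The Dirichlet energy `F(x) = -(1/2)⟨Cx,x⟩` on `D`, extended by `+∞` off `D`. -/
def dirichletF {H : Type*} [NormedAddCommGroup H] [InnerProductSpace ℝ H]
    (D : Submodule ℝ H) (C : D →ₗ[ℝ] H) (x : H) : EReal :=
  if h : x ∈ D then ((-(1/2) * ⟪C ⟨x, h⟩, x⟫ : ℝ) : EReal) else ⊤

/-- The lower semicontinuous envelope: `𝓔(x) = sup_{U ∈ 𝓝 x} inf_{y ∈ U} F(y)`. -/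
def lscEnvelope {H : Type*} [TopologicalSpace H] (F : H → EReal) (x : H) : EReal :=
  ⨆ U ∈ 𝓝 x, ⨅ y ∈ U, F y

end

section Aux

variable {H : Type*} [NormedAddCommGroup H] [InnerProductSpace ℝ H]
variable {D : Submodule ℝ H} {C : D →ₗ[ℝ] H}

lemma dirichletF_coe (x : D) :
    dirichletF D C (x : H) = ((-(1/2) * ⟪C x, (x : H)⟫ : ℝ) : EReal) := by
  simp [dirichletF, x.2]

lemma dirichletF_top {x : H} (hx : x ∉ D) : dirichletF D C x = ⊤ := by
  simp [dirichletF, hx]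

lemma B_expand (hsym : ∀ x y : D, ⟪C x, (y : H)⟫ = ⟪(x : H), C y⟫) (s r : ℝ) (x y : D) :
    ⟪C (s • x + r • y), ((s • x + r • y : D) : H)⟫
      = s^2 * ⟪C x, (x:H)⟫ + 2*s*r*⟪C x, (y:H)⟫ + r^2 * ⟪C y, (y:H)⟫ := by
  have hxy : ⟪C y, (x:H)⟫ = ⟪C x, (y:H)⟫ := by
    rw [hsym y x, real_inner_comm]
  push_cast
  simp only [map_add, map_smul, inner_add_left, inner_add_right, real_inner_smul_left,
    real_inner_smul_right, hxy]
  ring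

lemma B_sub_expand (hsym : ∀ x y : D, ⟪C x, (y : H)⟫ = ⟪(x : H), C y⟫) (x y : D) :
    ⟪C (x - y), ((x : H) - (y : H))⟫
      = ⟪C x, (x:H)⟫ - 2*⟪C x, (y:H)⟫ + ⟪C y, (y:H)⟫ := by
  have h := B_expand hsym 1 (-1) x y
  have e : (1:ℝ) • x + (-1:ℝ) • y = x - y := by module
  rw [e] at h
  push_cast at h
  rw [h]; ring

lemma dirichletF_nonneg (hdiss : ∀ x : D, ⟪C x, (x : H)⟫ ≤ 0) (x : H) :
    (0 : EReal) ≤ dirichletF D C x := by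
  by_cases hx : x ∈ D
  · rw [show x = ((⟨x, hx⟩ : D) : H) from rfl, dirichletF_coe]
    have := hdiss ⟨x, hx⟩
    exact_mod_cast by nlinarith
  · rw [dirichletF_top hx]; exact le_top

lemma EReal.le_coe_of_forall_add' {u : EReal} {r : ℝ}
    (h : ∀ ε : ℝ, 0 < ε → u ≤ ((r + ε : ℝ) : EReal)) : u ≤ (r : EReal) := by
  by_contra hc
  push_neg at hc
  rcases eq_or_ne u ⊤ with hu | hu
  · have := h 1 one_pos
    rw [hu] at this
    exact (EReal.coe_lt_top (r + 1)).not_ge this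
  · have hb : u ≠ ⊥ := fun hb => by simp [hb] at hc
    lift u to ℝ using ⟨hu, hb⟩
    rw [EReal.coe_lt_coe_iff] at hc
    have := h ((u - r)/2) (by linarith)
    rw [EReal.coe_le_coe_iff] at this
    linarith

lemma EReal.coe_le_of_forall_sub' {u : EReal} {r : ℝ}
    (h : ∀ ε : ℝ, 0 < ε → ((r - ε : ℝ) : EReal) ≤ u) : (r : EReal) ≤ u := by
  by_contra hc
  push_neg at hc
  rcases eq_or_ne u ⊥ with hu | hu
  · have := h 1 one_pos
    rw [hu, le_bot_iff] at this
    exact EReal.coe_ne_bot _ this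
  · have ht : u ≠ ⊤ := fun ht => by simp [ht] at hc
    lift u to ℝ using ⟨ht, hu⟩
    rw [EReal.coe_lt_coe_iff] at hc
    have := h ((r - u)/2) (by linarith)
    rw [EReal.coe_le_coe_iff] at this
    linarith

/-- Convexity of the Dirichlet energy, as an `EReal` inequality. -/
lemma dirichletF_convex (hsym : ∀ x y : D, ⟪C x, (y : H)⟫ = ⟪(x : H), C y⟫)
    (hdiss : ∀ x : D, ⟪C x, (x : H)⟫ ≤ 0)
    {t : ℝ} (ht0 : 0 ≤ t) (ht1 : t ≤ 1) (a b : H) :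
    dirichletF D C ((1 - t) • a + t • b)
      ≤ ((1 - t : ℝ) : EReal) * dirichletF D C a + ((t : ℝ) : EReal) * dirichletF D C b := by
  by_cases ha : a ∈ D
  · by_cases hb : b ∈ D
    · set xa : D := ⟨a, ha⟩
      set xb : D := ⟨b, hb⟩
      have hmem : (1 - t) • a + t • b = (((1 - t) • xa + t • xb : D) : H) := by
        push_cast; rfl
      rw [hmem, dirichletF_coe, show a = (xa : H) from rfl, dirichletF_coe,
        show b = (xb : H) from rfl, dirichletF_coe,
        ← EReal.coe_mul, ← EReal.coe_mul, ← EReal.coe_add, EReal.coe_le_coe_iff]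
      have hexp := B_expand hsym (1 - t) t xa xb
      have hsub := B_sub_expand hsym xa xb
      have hd := hdiss (xa - xb)
      have hkey : t * (1 - t) * ⟪C (xa - xb), ((xa:H) - (xb:H))⟫ ≤ 0 :=
        mul_nonpos_of_nonneg_of_nonpos (mul_nonneg ht0 (by linarith)) hd
      nlinarith [hexp, hsub, hkey]
    · rcases eq_or_lt_of_le ht0 with h0 | h0
      · subst h0
        simp [zero_mul, one_mul]
      · have hterm : ((t : ℝ) : EReal) * dirichletF D C b = ⊤ := by
          rw [dirichletF_top hb, EReal.coe_mul_top_of_pos h0]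
        have hne : ((1 - t : ℝ) : EReal) * dirichletF D C a ≠ ⊥ := by
          have h := mul_nonneg (show (0:EReal) ≤ ((1 - t : ℝ) : EReal) by
            exact_mod_cast sub_nonneg.mpr ht1) (dirichletF_nonneg hdiss a)
          intro hbot; rw [hbot] at h; simp at h
        rw [hterm, EReal.add_top_of_ne_bot hne]
        exact le_top
  · rcases eq_or_lt_of_le ht1 with h1 | h1
    · subst h1
      simp [zero_mul, one_mul]
    · have hterm : ((1 - t : ℝ) : EReal) * dirichletF D C a = ⊤ := by
        rw [dirichletF_top ha, EReal.coe_mul_top_of_pos (by linarith : (0:ℝ) < 1 - t)]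
      have hne : ((t : ℝ) : EReal) * dirichletF D C b ≠ ⊥ := by
        have h := mul_nonneg (show (0:EReal) ≤ ((t : ℝ) : EReal) by exact_mod_cast ht0)
          (dirichletF_nonneg hdiss b)
        intro hbot; rw [hbot] at h; simp at h
      rw [hterm, EReal.top_add_of_ne_bot hne]
      exact le_top

end Aux

/-- Properties of the lower semicontinuous envelope of the Dirichlet energy (Lemma 5.7(b)). -/
theorem dirichlet_lsc_envelope_properties
    {H : Type*} [NormedAddCommGroup H] [InnerProductSpace ℝ H] [CompleteSpace H]
    (D : Submodule ℝ H) (C : D →ₗ[ℝ] H)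
    (hsym : ∀ x y : D, ⟪C x, (y : H)⟫ = ⟪(x : H), C y⟫)
    (hdiss : ∀ x : D, ⟪C x, (x : H)⟫ ≤ 0) :
    (∀ x : H, x ∈ D → lscEnvelope (dirichletF D C) x < ⊤) ∧
    (∀ x : H, (0 : EReal) ≤ lscEnvelope (dirichletF D C) x ∧
      lscEnvelope (dirichletF D C) x ≤ dirichletF D C x) ∧
    (∀ x : H, x ∈ D → lscEnvelope (dirichletF D C) x = dirichletF D C x) ∧
    (∀ x y : H, ∀ t ∈ Set.Icc (0:ℝ) 1,
      lscEnvelope (dirichletF D C) ((1 - t) • x + t • y) ≤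
        ((1 - t : ℝ) : EReal) * lscEnvelope (dirichletF D C) x
          + ((t : ℝ) : EReal) * lscEnvelope (dirichletF D C) y) ∧
    (∀ ρ : H, lscEnvelope (dirichletF D C) ρ < ⊤ →
      ∃ ρs : ℕ → H, (∀ n, ρs n ∈ D) ∧
        Filter.Tendsto ρs Filter.atTop (𝓝 ρ) ∧
        Filter.Tendsto (fun n => dirichletF D C (ρs n)) Filter.atTop
          (𝓝 (lscEnvelope (dirichletF D C) ρ))) := by
  classical
  set F : H → EReal := dirichletF D C with hFdef
  have hF0 : ∀ x : H, (0:EReal) ≤ F x := dirichletF_nonneg hdiss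
  have hEleF : ∀ x : H, lscEnvelope F x ≤ F x := by
    intro x
    exact iSup₂_le fun U hU => iInf₂_le x (mem_of_mem_nhds hU)
  have hE0 : ∀ x : H, (0:EReal) ≤ lscEnvelope F x := by
    intro x
    refine le_trans (le_iInf₂ fun y _ => hF0 y)
      (le_iSup₂ (f := fun U (_ : U ∈ 𝓝 x) => ⨅ y ∈ U, F y) Set.univ univ_mem)
  -- (iii) lower bound on D
  have hFleE : ∀ x : H, x ∈ D → F x ≤ lscEnvelope F x := by
    intro x hx
    set xd : D := ⟨x, hx⟩ with hxd
    have hxc : x = (xd : H) := rfl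
    rw [hFdef, hxc, dirichletF_coe]
    set r : ℝ := -(1/2) * ⟪C xd, (xd:H)⟫ with hr
    refine EReal.coe_le_of_forall_sub' fun ε hε => ?_
    set U : Set H := {y | ⟪C xd, y - x⟫ < ε} with hU
    have hUopen : IsOpen U := by
      have hc : Continuous fun y : H => ⟪C xd, y - x⟫ :=
        continuous_const.inner (continuous_id.sub continuous_const)
      exact isOpen_lt hc continuous_const
    have hxU : (xd:H) ∈ U := by
      simp only [hU, Set.mem_setOf_eq, ← hxc, sub_self, inner_zero_right]
      exact hε
    refine le_trans ?_
      (le_iSup₂ (f := fun U (_ : U ∈ 𝓝 (xd:H)) => ⨅ y ∈ U, F y) U (hUopen.mem_nhds hxU))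
    refine le_iInf₂ fun y hy => ?_
    by_cases hyD : y ∈ D
    · set yd : D := ⟨y, hyD⟩ with hyd
      rw [hFdef, show y = (yd:H) from rfl, dirichletF_coe, EReal.coe_le_coe_iff]
      have hsub := B_sub_expand hsym yd xd
      have hd := hdiss (yd - xd)
      have hy' : ⟪C xd, y - x⟫ < ε := hy
      have hiy : ⟪C xd, y - x⟫ = ⟪C xd, (yd:H)⟫ - ⟪C xd, (xd:H)⟫ := by
        rw [show y - x = (yd:H) - (xd:H) from rfl, inner_sub_right]
      have hxy : ⟪C yd, (xd:H)⟫ = ⟪C xd, (yd:H)⟫ := by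
        rw [hsym yd xd, real_inner_comm]
      have hcoe : ((yd - xd : D) : H) = (yd:H) - (xd:H) := rfl
      rw [hcoe] at hd
      nlinarith [hsub, hd, hy', hiy, hxy]
    · rw [hFdef, dirichletF_top hyD]; exact le_top
  have hFD_lt : ∀ x : H, x ∈ D → F x < ⊤ := by
    intro x hx
    rw [hFdef, show x = ((⟨x, hx⟩ : D) : H) from rfl, dirichletF_coe]
    exact EReal.coe_lt_top _
  refine ⟨fun x hx => lt_of_le_of_lt (hEleF x) (hFD_lt x hx),
    fun x => ⟨hE0 x, hEleF x⟩,
    fun x hx => le_antisymm (hEleF x) (hFleE x hx), ?_, ?_⟩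
  · -- convexity
    rintro x y t ⟨ht0, ht1⟩
    refine iSup₂_le fun U hU => ?_
    have hcont : Continuous fun p : H × H => (1-t) • p.1 + t • p.2 := by fun_prop
    have hpre : (fun p : H × H => (1-t) • p.1 + t • p.2) ⁻¹' U ∈ 𝓝 (x, y) :=
      hcont.continuousAt.preimage_mem_nhds hU
    rcases mem_nhds_prod_iff.mp hpre with ⟨V, hV, W, hW, hVW⟩
    set p : EReal := ⨅ a ∈ V, F a with hp
    set q : EReal := ⨅ b ∈ W, F b with hq
    have hpx : p ≤ lscEnvelope F x :=
      le_iSup₂ (f := fun U (_ : U ∈ 𝓝 x) => ⨅ y ∈ U, F y) V hV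
    have hqy : q ≤ lscEnvelope F y :=
      le_iSup₂ (f := fun U (_ : U ∈ 𝓝 y) => ⨅ y ∈ U, F y) W hW
    have hmemU : ∀ a ∈ V, ∀ b ∈ W, (1-t) • a + t • b ∈ U := fun a ha b hb =>
      hVW (Set.mk_mem_prod ha hb)
    have hstep : ∀ a ∈ V, ∀ b ∈ W,
        (⨅ z ∈ U, F z) ≤ ((1-t:ℝ):EReal) * F a + ((t:ℝ):EReal) * F b := fun a ha b hb =>
      le_trans (iInf₂_le _ (hmemU a ha b hb)) (dirichletF_convex hsym hdiss ht0 ht1 a b)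
    have hp0 : (0:EReal) ≤ p := le_iInf₂ fun z _ => hF0 z
    have hq0 : (0:EReal) ≤ q := le_iInf₂ fun z _ => hF0 z
    have hkey : (⨅ z ∈ U, F z) ≤ ((1-t:ℝ):EReal) * p + ((t:ℝ):EReal) * q := by
      rcases Filter.nonempty_of_mem hV with ⟨a₀, ha₀⟩
      rcases Filter.nonempty_of_mem hW with ⟨b₀, hb₀⟩
      rcases eq_or_ne p ⊤ with hptop | hptop
      · rcases eq_or_lt_of_le ht1 with h1 | h1
        · subst h1
          simp only [sub_self, EReal.coe_zero, zero_mul, zero_add, EReal.coe_one, one_mul]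
          refine le_iInf₂ fun b hb => ?_
          have := hmemU a₀ ha₀ b hb
          rw [sub_self, zero_smul, one_smul, zero_add] at this
          exact iInf₂_le b this
        · rw [hptop, EReal.coe_mul_top_of_pos (by linarith : (0:ℝ) < 1 - t),
            EReal.top_add_of_ne_bot]
          · exact le_top
          · have h := mul_nonneg (show (0:EReal) ≤ ((t:ℝ):EReal) by exact_mod_cast ht0) hq0
            intro hbot; rw [hbot] at h; simp at h
      rcases eq_or_ne q ⊤ with hqtop | hqtop
      · rcases eq_or_lt_of_le ht0 with h0 | h0
        · subst h0
          simp only [sub_zero, EReal.coe_one, one_mul, EReal.coe_zero, zero_mul, add_zero]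
          refine le_iInf₂ fun a ha => ?_
          have := hmemU a ha b₀ hb₀
          rw [sub_zero, one_smul, zero_smul, add_zero] at this
          exact iInf₂_le a this
        · rw [hqtop, EReal.coe_mul_top_of_pos h0, EReal.add_top_of_ne_bot]
          · exact le_top
          · have h := mul_nonneg
              (show (0:EReal) ≤ ((1-t:ℝ):EReal) by exact_mod_cast sub_nonneg.mpr ht1) hp0
            intro hbot; rw [hbot] at h; simp at h
      · have hpbot : p ≠ ⊥ := fun hb => by rw [hb] at hp0; simp at hp0
        have hqbot : q ≠ ⊥ := fun hb => by rw [hb] at hq0; simp at hq0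
        obtain ⟨pr, hpr⟩ : ∃ pr : ℝ, p = (pr : EReal) :=
          ⟨p.toReal, (EReal.coe_toReal hptop hpbot).symm⟩
        obtain ⟨qr, hqr⟩ : ∃ qr : ℝ, q = (qr : EReal) :=
          ⟨q.toReal, (EReal.coe_toReal hqtop hqbot).symm⟩
        rw [hpr, hqr, ← EReal.coe_mul, ← EReal.coe_mul, ← EReal.coe_add]
        refine EReal.le_coe_of_forall_add' fun ε hε => ?_
        obtain ⟨a, ha, hFa⟩ : ∃ a ∈ V, F a < ((pr + ε : ℝ) : EReal) := by
          by_contra hcon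
          push_neg at hcon
          have hle : ((pr + ε : ℝ) : EReal) ≤ p := le_iInf₂ hcon
          rw [hpr, EReal.coe_le_coe_iff] at hle; linarith
        obtain ⟨b, hb, hFb⟩ : ∃ b ∈ W, F b < ((qr + ε : ℝ) : EReal) := by
          by_contra hcon
          push_neg at hcon
          have hle : ((qr + ε : ℝ) : EReal) ≤ q := le_iInf₂ hcon
          rw [hqr, EReal.coe_le_coe_iff] at hle; linarith
        refine le_trans (hstep a ha b hb) ?_
        have h1 : ((1-t:ℝ):EReal) * F a ≤ ((1-t:ℝ):EReal) * ((pr + ε : ℝ) : EReal) :=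
          mul_le_mul_of_nonneg_left hFa.le
            (by exact_mod_cast sub_nonneg.mpr ht1)
        have h2 : ((t:ℝ):EReal) * F b ≤ ((t:ℝ):EReal) * ((qr + ε : ℝ) : EReal) :=
          mul_le_mul_of_nonneg_left hFb.le (by exact_mod_cast ht0)
        refine le_trans (add_le_add h1 h2) ?_
        rw [← EReal.coe_mul, ← EReal.coe_mul, ← EReal.coe_add, EReal.coe_le_coe_iff]
        nlinarith
    refine le_trans hkey (add_le_add ?_ ?_)
    · exact mul_le_mul_of_nonneg_left hpx (by exact_mod_cast sub_nonneg.mpr ht1)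
    · exact mul_le_mul_of_nonneg_left hqy (by exact_mod_cast ht0)
  · -- recovery sequence
    intro ρ hρ
    set E : EReal := lscEnvelope F ρ with hEdef
    have hE0' : (0:EReal) ≤ E := hE0 ρ
    have hEtop : E ≠ ⊤ := hρ.ne
    have hEbot : E ≠ ⊥ := fun hb => by rw [hb] at hE0'; simp at hE0'
    set m : ℕ → EReal := fun n => ⨅ y ∈ Metric.ball ρ (1/(n+1)), F y with hm
    have hmono : Monotone m := by
      intro n k hnk
      refine le_iInf₂ fun y hy => iInf₂_le y (Metric.ball_subset_ball ?_ hy)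
      have h1 : (0:ℝ) < n + 1 := by positivity
      have h2 : (n:ℝ) + 1 ≤ (k:ℝ) + 1 := by exact_mod_cast Nat.succ_le_succ hnk
      exact one_div_le_one_div_of_le h1 h2
    have hmE : ∀ n, m n ≤ E := fun n =>
      le_iSup₂ (f := fun U (_ : U ∈ 𝓝 ρ) => ⨅ y ∈ U, F y)
        (Metric.ball ρ (1/(n+1))) (Metric.ball_mem_nhds ρ (by positivity))
    have hm0 : ∀ n, (0:EReal) ≤ m n := fun n => le_iInf₂ fun y _ => hF0 y
    have hsup : ⨆ n, m n = E := by
      refine le_antisymm (iSup_le hmE) ?_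
      refine iSup₂_le fun U hU => ?_
      rcases Metric.mem_nhds_iff.mp hU with ⟨ε, hε, hball⟩
      rcases exists_nat_one_div_lt hε with ⟨n, hn⟩
      refine le_trans ?_ (le_iSup m n)
      refine le_iInf₂ fun y hy => iInf₂_le y (hball ?_)
      exact Metric.ball_subset_ball hn.le hy
    have hmtend : Tendsto m atTop (𝓝 E) := hsup ▸ tendsto_atTop_iSup hmono
    have hmn_top : ∀ n, m n ≠ ⊤ := fun n => (lt_of_le_of_lt (hmE n) hρ).ne
    have hmn_bot : ∀ n, m n ≠ ⊥ := fun n hb => by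
      have := hm0 n; rw [hb] at this; simp at this
    have hchoice : ∀ n : ℕ, ∃ y : H,
        y ∈ Metric.ball ρ (1/(n+1)) ∧ F y < m n + ((1/(n+1) : ℝ) : EReal) := by
      intro n
      by_contra hcon
      push_neg at hcon
      have hle : m n + ((1/(n+1):ℝ):EReal) ≤ m n := le_iInf₂ hcon
      lift m n to ℝ using ⟨hmn_top n, hmn_bot n⟩ with mn hmn
      rw [← EReal.coe_add, EReal.coe_le_coe_iff] at hle
      have : (0:ℝ) < 1/(n+1) := by positivity
      linarith
    choose ρs hρs1 hρs2 using hchoice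
    have hFtoplt : ∀ n, F (ρs n) < ⊤ := fun n =>
      lt_trans (hρs2 n) (EReal.add_lt_top (hmn_top n) (EReal.coe_ne_top _))
    have hmemD : ∀ n, ρs n ∈ D := by
      intro n
      by_contra hn
      have h := hFtoplt n
      rw [hFdef, dirichletF_top hn] at h
      exact lt_irrefl _ h
    have hdist : ∀ n, dist (ρs n) ρ < 1/(n+1) := fun n => Metric.mem_ball.mp (hρs1 n)
    have htend : Tendsto ρs atTop (𝓝 ρ) := by
      rw [tendsto_iff_dist_tendsto_zero]
      refine squeeze_zero (fun n => dist_nonneg) (fun n => (hdist n).le) ?_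
      exact tendsto_one_div_add_atTop_nhds_zero_nat
    set E' : ℝ := E.toReal with hE'
    have hEcoe : E = (E' : EReal) := (EReal.coe_toReal hEtop hEbot).symm
    have hFn_bot : ∀ n, F (ρs n) ≠ ⊥ := fun n hb => by
      have := hF0 (ρs n); rw [hb] at this; simp at this
    have hFn_top : ∀ n, F (ρs n) ≠ ⊤ := fun n => (hFtoplt n).ne
    set f : ℕ → ℝ := fun n => (F (ρs n)).toReal with hf
    have hFcoe : ∀ n, F (ρs n) = ((f n : ℝ) : EReal) := fun n =>
      (EReal.coe_toReal (hFn_top n) (hFn_bot n)).symm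
    set m' : ℕ → ℝ := fun n => (m n).toReal with hm'
    have hmcoe : ∀ n, m n = ((m' n : ℝ) : EReal) := fun n =>
      (EReal.coe_toReal (hmn_top n) (hmn_bot n)).symm
    have hm'tend : Tendsto m' atTop (𝓝 E') :=
      (EReal.tendsto_toReal hEtop hEbot).comp hmtend
    have hlow : ∀ n, m' n ≤ f n := by
      intro n
      have h : m n ≤ F (ρs n) := iInf₂_le (ρs n) (hρs1 n)
      rw [hmcoe n, hFcoe n, EReal.coe_le_coe_iff] at h
      exact h
    have hhigh : ∀ n, f n ≤ m' n + 1/(n+1) := by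
      intro n
      have h := (hρs2 n).le
      rw [hFcoe n, hmcoe n, ← EReal.coe_add, EReal.coe_le_coe_iff] at h
      exact h
    have hupper : Tendsto (fun n : ℕ => m' n + 1/((n:ℝ)+1)) atTop (𝓝 E') := by
      have := hm'tend.add tendsto_one_div_add_atTop_nhds_zero_nat
      simpa using this
    have hf_tend : Tendsto f atTop (𝓝 E') :=
      tendsto_of_tendsto_of_tendsto_of_le_of_le hm'tend hupper hlow hhigh
    refine ⟨ρs, hmemD, htend, ?_⟩
    rw [hEcoe, funext hFcoe]
    exact EReal.tendsto_coe.mpr hf_tend
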